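/- arXiv:2112.11321 — 2 statements merged into one kernel-verified Lean document; each statement's English description precedes it below -/
import Mathlib

section
/- Weaker eigenvalue-type distillation bound: if τ is a state with ⟨φ|τ|φ⟩ ≥ 1 − ε for a pure state φ and Ω_F(τ) < ∞, then ε ≥ (1 − F_F(φ))/Ω_F(τ). Combined with the bound Ω_F(ρ) ≤ R_F(ρ)·λ_min(ρ)^{-1} for full-rank ρ, this yields ε ≥ λ_min(ρ)(1 − F_F(φ))/R_F(ρ) whenever Ω_F(τ) ≤ Ω_F(ρ). -/
open scoped ENNReal ComplexOrder
open Matrix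

noncomputable section

variable {ι κ : Type*}

/-- Loewner order: `A ≤ B` iff `B - A` is positive semidefinite. -/
def Loe [Fintype ι] (A B : Matrix ι ι ℂ) : Prop := (B - A).PosSemidef

/-- The (non-logarithmic) max-relative entropy `Rmax(ρ‖σ) = inf {λ : ρ ≤ λσ}`,
with the convention `inf ∅ = ∞`. -/
noncomputable def Rmax [Fintype ι] (ρ σ : Matrix ι ι ℂ) : ℝ≥0∞ :=
  sInf {x : ℝ≥0∞ | ∃ l : ℝ, 0 ≤ l ∧ x = ENNReal.ofReal l ∧ ((l : ℂ) • σ - ρ).PosSemidef}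

/-- A density matrix: positive semidefinite with unit trace. -/
def IsState [Fintype ι] (ρ : Matrix ι ι ℂ) : Prop := ρ.PosSemidef ∧ ρ.trace = 1

/-- The projective robustness `Ω_F(ρ) = inf_{σ∈F} Rmax(ρ‖σ) · Rmax(σ‖ρ)`. -/
noncomputable def Omega [Fintype ι] (F : Set (Matrix ι ι ℂ)) (ρ : Matrix ι ι ℂ) : ℝ≥0∞ :=
  ⨅ σ ∈ F, Rmax ρ σ * Rmax σ ρ

/-- The cone generated by `F`: `{cσ : c ≥ 0, σ ∈ F}`. -/
def coneF [Fintype ι] (F : Set (Matrix ι ι ℂ)) : Set (Matrix ι ι ℂ) :=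
  {X | ∃ c : ℝ, 0 ≤ c ∧ ∃ σ ∈ F, X = (c : ℂ) • σ}

/-- The affine hull of `F` (real affine combinations). -/
def affHull [Fintype ι] (F : Set (Matrix ι ι ℂ)) : Set (Matrix ι ι ℂ) :=
  {Z | ∃ (k : ℕ) (c : Fin k → ℝ) (σ : Fin k → Matrix ι ι ℂ),
    (∀ i, σ i ∈ F) ∧ (∑ i, c i) = 1 ∧ Z = ∑ i, ((c i : ℂ) • σ i)}

/-- The generalised robustness `R_F(ρ) = inf_{σ∈F} Rmax(ρ‖σ)`. -/
noncomputable def RF [Fintype ι] (F : Set (Matrix ι ι ℂ)) (ρ : Matrix ι ι ℂ) : ℝ≥0∞ :=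
  ⨅ σ ∈ F, Rmax ρ σ

/-- The resource weight `W_F(ρ) = (inf_{σ∈F} Rmax(σ‖ρ))⁻¹`. -/
noncomputable def WF [Fintype ι] (F : Set (Matrix ι ι ℂ)) (ρ : Matrix ι ι ℂ) : ℝ≥0∞ :=
  (⨅ σ ∈ F, Rmax σ ρ)⁻¹

/-! If `τ ≤ lσ` and `σ ≤ mτ` with `σ ∈ F`, testing `mτ - σ ≥ 0` against `φ` and using
`⟨φ|X|φ⟩ ≤ tr X` for `X ≥ 0` gives `1 - ⟨φ|σ|φ⟩ ≤ m (1 - ⟨φ|τ|φ⟩) ≤ mε`; since `l ≥ 1`, also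
`1 - F_F(φ) ≤ lmε`, and taking infima over `l`, `m` and `σ` gives the first bound. For the second,
every state satisfies `σ ≤ 1 ≤ λ_min(ρ)⁻¹ ρ`, so taking `σ` optimal for `R_F(ρ)` gives
`Ω_F(ρ) ≤ R_F(ρ) λ_min(ρ)⁻¹`. -/

open scoped MatrixOrder

section Loewner

variable [Fintype ι] [DecidableEq ι]

theorem Matrix.PosSemidef.le_algebraMap_trace_re {M : Matrix ι ι ℂ} (hM : M.PosSemidef) :
    M ≤ algebraMap ℝ (Matrix ι ι ℂ) M.trace.re := by
  rw [le_algebraMap_iff_spectrum_le hM.1.isSelfAdjoint,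
    hM.1.spectrum_real_eq_range_eigenvalues]
  rintro _ ⟨i, rfl⟩
  have htr : M.trace.re = ∑ j, hM.1.eigenvalues j := by
    simp [hM.1.trace_eq_sum_eigenvalues, Complex.re_sum]
  rw [htr]
  exact Finset.single_le_sum (fun j _ => hM.eigenvalues_nonneg j) (Finset.mem_univ i)

theorem Matrix.PosSemidef.re_dotProduct_le_trace_re {M : Matrix ι ι ℂ} (hM : M.PosSemidef)
    {ψ : ι → ℂ} (hψ : star ψ ⬝ᵥ ψ = 1) : (star ψ ⬝ᵥ (M *ᵥ ψ)).re ≤ M.trace.re := by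
  have h := (Matrix.le_iff.mp hM.le_algebraMap_trace_re).re_dotProduct_nonneg ψ
  rw [Algebra.algebraMap_eq_smul_one, sub_mulVec, dotProduct_sub, smul_mulVec, one_mulVec,
    dotProduct_smul, hψ] at h
  simpa using h

theorem IsState.le_one {σ : Matrix ι ι ℂ} (hσ : IsState σ) : σ ≤ 1 := by
  simpa [hσ.2] using hσ.1.le_algebraMap_trace_re

end Loewner

section Rmax

variable [Fintype ι]

theorem IsState.one_le_of_le_smul {σ τ : Matrix ι ι ℂ} (hσ : IsState σ) (hτ : IsState τ) {l : ℝ}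
    (hl : τ ≤ (l : ℂ) • σ) : 1 ≤ l := by
  have h := (Matrix.le_iff.mp hl).trace_nonneg
  rw [trace_sub, trace_smul, hσ.2, hτ.2, smul_eq_mul, mul_one, ← Complex.ofReal_one,
    ← Complex.ofReal_sub, Complex.zero_le_real] at h
  linarith

theorem IsState.one_le_Rmax {ρ σ : Matrix ι ι ℂ} (hρ : IsState ρ) (hσ : IsState σ) :
    1 ≤ Rmax ρ σ :=
  le_sInf fun _ ⟨_, _, hx, hl⟩ => hx ▸ ENNReal.one_le_ofReal.mpr (hσ.one_le_of_le_smul hρ hl)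

theorem Rmax_le_ofReal {ρ σ : Matrix ι ι ℂ} {l : ℝ} (hl0 : 0 ≤ l) (hl : ρ ≤ (l : ℂ) • σ) :
    Rmax ρ σ ≤ ENNReal.ofReal l :=
  sInf_le ⟨l, hl0, rfl, hl⟩

theorem ofReal_le_Rmax_mul_Rmax {ρ σ : Matrix ι ι ℂ} (hρ : IsState ρ) (hσ : IsState σ) {c : ℝ}
    (h : ∀ l m : ℝ, ρ ≤ (l : ℂ) • σ → σ ≤ (m : ℂ) • ρ → c ≤ l * m) :
    ENNReal.ofReal c ≤ Rmax ρ σ * Rmax σ ρ := by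
  have hne_zero {a b : Matrix ι ι ℂ} (ha : IsState a) (hb : IsState b) : Rmax a b ≠ 0 :=
    (zero_lt_one.trans_le (ha.one_le_Rmax hb)).ne'
  obtain hρσ | hρσ := eq_or_ne (Rmax ρ σ) ⊤
  · simp [hρσ, ENNReal.top_mul (hne_zero hσ hρ)]
  obtain hσρ | hσρ := eq_or_ne (Rmax σ ρ) ⊤
  · simp [hσρ, ENNReal.mul_top (hne_zero hρ hσ)]
  obtain ⟨x, hx, hxtop⟩ := sInf_lt_iff.mp hρσ.lt_top
  obtain ⟨y, hy, hytop⟩ := sInf_lt_iff.mp hσρ.lt_top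
  rw [Rmax, Rmax, sInf_eq_iInf', sInf_eq_iInf']
  refine ENNReal.le_iInf_mul_iInf ⟨⟨x, hx⟩, hxtop.ne⟩ ⟨⟨y, hy⟩, hytop.ne⟩ ?_
  rintro ⟨_, l, hl0, rfl, hl⟩ ⟨_, m, -, rfl, hm⟩
  rw [← ENNReal.ofReal_mul hl0]
  exact ENNReal.ofReal_le_ofReal (h l m hl hm)

end Rmax

section Distillation

variable [Fintype ι] [DecidableEq ι]

theorem one_sub_le_mul_of_le_smul {σ τ : Matrix ι ι ℂ} (hσ : IsState σ) (hτ : IsState τ)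
    {ψ : ι → ℂ} (hψ : star ψ ⬝ᵥ ψ = 1) {ε f m : ℝ}
    (hfid : 1 - ε ≤ (star ψ ⬝ᵥ (τ *ᵥ ψ)).re) (hf : (star ψ ⬝ᵥ (σ *ᵥ ψ)).re ≤ f)
    (hm : σ ≤ (m : ℂ) • τ) : 1 - f ≤ m * ε := by
  have hm1 : 1 ≤ m := hτ.one_le_of_le_smul hσ hm
  have h := (Matrix.le_iff.mp hm).re_dotProduct_le_trace_re hψ
  rw [trace_sub, trace_smul, hτ.2, hσ.2, sub_mulVec, dotProduct_sub, smul_mulVec,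
    dotProduct_smul] at h
  simp only [Complex.sub_re, smul_eq_mul, Complex.re_ofReal_mul, mul_one, Complex.one_re,
    Complex.ofReal_re] at h
  nlinarith

theorem ofReal_one_sub_le_mul_Omega {F : Set (Matrix ι ι ℂ)} (hF : ∀ σ ∈ F, IsState σ)
    {ψ : ι → ℂ} (hψ : star ψ ⬝ᵥ ψ = 1) {f : ℝ} (hfmax : ∀ σ ∈ F, (star ψ ⬝ᵥ (σ *ᵥ ψ)).re ≤ f)
    {ε : ℝ} (hε : 0 < ε) {τ : Matrix ι ι ℂ} (hτ : IsState τ)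
    (hfid : 1 - ε ≤ (star ψ ⬝ᵥ (τ *ᵥ ψ)).re) :
    ENNReal.ofReal (1 - f) ≤ ENNReal.ofReal ε * Omega F τ := by
  rw [← mul_div_cancel₀ (1 - f) hε.ne', ENNReal.ofReal_mul hε.le]
  refine mul_le_mul_right (le_iInf₂ fun σ hσF => ofReal_le_Rmax_mul_Rmax hτ (hF σ hσF) ?_) _
  intro l m hl hm
  have hσ := hF σ hσF
  have hl1 : 1 ≤ l := hσ.one_le_of_le_smul hτ hl
  have hm1 : 1 ≤ m := hτ.one_le_of_le_smul hσ hm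
  rw [div_le_iff₀ hε, mul_assoc]
  calc 1 - f ≤ m * ε := one_sub_le_mul_of_le_smul hσ hτ hψ hfid (hfmax σ hσF) hm
    _ ≤ l * (m * ε) := le_mul_of_one_le_left (by nlinarith) hl1

theorem Omega_le_RF_mul_ofReal_inv {F : Set (Matrix ι ι ℂ)}
    (hF : ∀ σ ∈ F, IsState σ) {ρ : Matrix ι ι ℂ} (hρ : ρ.IsHermitian)
    (hach : ∃ σ ∈ F, Rmax ρ σ = RF F ρ) {c : ℝ} (hc : 0 < c) (hcρ : ∀ i, c ≤ hρ.eigenvalues i) :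
    Omega F ρ ≤ RF F ρ * ENNReal.ofReal c⁻¹ := by
  obtain ⟨σ, hσF, hσ⟩ := hach
  have hcρ' : algebraMap ℝ (Matrix ι ι ℂ) c ≤ ρ := by
    rw [algebraMap_le_iff_le_spectrum hρ.isSelfAdjoint, hρ.spectrum_real_eq_range_eigenvalues]
    rintro _ ⟨i, rfl⟩
    exact hcρ i
  -- `σ ≤ 1 ≤ c⁻¹ • ρ`, the second step being `c ≤ ρ` scaled by `c⁻¹`
  have hσρ : σ ≤ ((c⁻¹ : ℝ) : ℂ) • ρ := by
    have h := ((Matrix.le_iff.mp hcρ').smul (inv_nonneg.mpr hc.le)).add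
      (Matrix.le_iff.mp (hF σ hσF).le_one)
    rw [Matrix.le_iff]
    convert h using 1
    rw [Algebra.algebraMap_eq_smul_one, smul_sub, smul_smul, inv_mul_cancel₀ hc.ne', one_smul,
      Complex.coe_smul]
    abel
  calc Omega F ρ ≤ Rmax ρ σ * Rmax σ ρ := iInf₂_le σ hσF
    _ ≤ RF F ρ * ENNReal.ofReal c⁻¹ := hσ ▸ mul_le_mul_right (Rmax_le_ofReal (by positivity) hσρ) _

end Distillation

theorem eigenvalue_bound_general [Fintype ι] [DecidableEq ι]
    (F : Set (Matrix ι ι ℂ)) (hFstates : ∀ σ ∈ F, IsState σ)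
    (ψ : ι → ℂ) (hψ : star ψ ⬝ᵥ ψ = 1)
    (f : ℝ)
    (hfmax : ∀ σ ∈ F, (star ψ ⬝ᵥ (σ *ᵥ ψ)).re ≤ f)
    (ε : ℝ) (hε0 : 0 < ε)
    (τ : Matrix ι ι ℂ) (hτ : IsState τ)
    (hfid : 1 - ε ≤ (star ψ ⬝ᵥ (τ *ᵥ ψ)).re)
    (ρ : Matrix ι ι ℂ) (hρ : IsState ρ)
    (hach : ∃ σ ∈ F, Rmax ρ σ = RF F ρ)
    (lammin : ℝ) (hlam : lammin = ⨅ i, (hρ.1.isHermitian).eigenvalues i)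
    (hmono : Omega F τ ≤ Omega F ρ) :
    ENNReal.ofReal (1 - f) ≤ ENNReal.ofReal ε * Omega F τ ∧
      ENNReal.ofReal (lammin * (1 - f)) ≤ ENNReal.ofReal ε * RF F ρ := by
  have hτ_bound := ofReal_one_sub_le_mul_Omega hFstates hψ hfmax hε0 hτ hfid
  refine ⟨hτ_bound, ?_⟩
  have hlam_le (i : ι) : lammin ≤ hρ.1.isHermitian.eigenvalues i :=
    hlam ▸ ciInf_le (Set.finite_range _).bddBelow i
  obtain hlam0 | hlam0 := (hlam ▸ Real.iInf_nonneg hρ.1.eigenvalues_nonneg : 0 ≤ lammin).eq_or_lt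
  · simp [← hlam0]
  calc ENNReal.ofReal (lammin * (1 - f))
      = ENNReal.ofReal lammin * ENNReal.ofReal (1 - f) := ENNReal.ofReal_mul hlam0.le
    _ ≤ ENNReal.ofReal lammin * (ENNReal.ofReal ε * (RF F ρ * ENNReal.ofReal lammin⁻¹)) := by
        gcongr
        exact hτ_bound.trans (mul_le_mul_right (hmono.trans
          (Omega_le_RF_mul_ofReal_inv hFstates hρ.1.isHermitian hach hlam0 hlam_le)) _)
    _ = ENNReal.ofReal ε * RF F ρ * ENNReal.ofReal (lammin * lammin⁻¹) := by
        rw [ENNReal.ofReal_mul hlam0.le]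
        ring
    _ = ENNReal.ofReal ε * RF F ρ := by rw [mul_inv_cancel₀ hlam0.ne', ENNReal.ofReal_one, mul_one]

/-- Weaker eigenvalue-type distillation bound: if `⟨φ|τ|φ⟩ ≥ 1-ε` and
`Ω_F(τ) < ∞`, then `ε ≥ (1 - F_F(φ))/Ω_F(τ)`; combined with
`Ω_F(ρ) ≤ R_F(ρ)·λ_min(ρ)⁻¹` for a full-rank `ρ` with `Ω_F(τ) ≤ Ω_F(ρ)`, this yields
`ε ≥ λ_min(ρ)(1 - F_F(φ))/R_F(ρ)`. -/
theorem eigenvalue_bound [Fintype ι] [DecidableEq ι] [Nonempty ι]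
    (F : Set (Matrix ι ι ℂ)) (hF : IsClosed F) (hFstates : ∀ σ ∈ F, IsState σ)
    (ψ : ι → ℂ) (hψ : star ψ ⬝ᵥ ψ = 1)
    (f : ℝ) (hf0 : 0 ≤ f) (hf1 : f < 1)
    (hfmax : ∀ σ ∈ F, (star ψ ⬝ᵥ (σ *ᵥ ψ)).re ≤ f)
    (ε : ℝ) (hε0 : 0 < ε) (hε1 : ε ≤ 1)
    (τ : Matrix ι ι ℂ) (hτ : IsState τ) (hfin : Omega F τ ≠ ⊤)
    (hfid : 1 - ε ≤ (star ψ ⬝ᵥ (τ *ᵥ ψ)).re)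
    (ρ : Matrix ι ι ℂ) (hρ : IsState ρ) (hfull : IsUnit ρ.det)
    (hach : ∃ σ ∈ F, Rmax ρ σ = RF F ρ)
    (lammin : ℝ) (hlam : lammin = ⨅ i, (hρ.1.isHermitian).eigenvalues i)
    (hmono : Omega F τ ≤ Omega F ρ) :
    ENNReal.ofReal (1 - f) ≤ ENNReal.ofReal ε * Omega F τ ∧
      ENNReal.ofReal (lammin * (1 - f)) ≤ ENNReal.ofReal ε * RF F ρ :=
  eigenvalue_bound_general F hFstates ψ hψ f hfmax ε hε0 τ hτ hfid ρ hρ hach lammin hlam hmono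
end
end

section
/- Lower bound on exact transformation probability: for states ρ, ρ' with V_F(ρ) := max_{σ∈F}⟨Π_ρ, σ⟩ < 1 and λ := R^F_F(ρ') < ∞ (i.e. there is σ ∈ F with λσ − ρ' ∈ cone(F)), the map E(X) := μ⟨Π_ρ, X⟩ρ' + ⟨I − Π_ρ, X⟩(λσ − ρ')/(λ−1) with μ = min{1, (1−V_F(ρ))/((λ−1)V_F(ρ))} is completely positive, trace-non-increasing, maps cone(F) into cone(F), and satisfies E(ρ) = μρ'. Hence the transformation ρ → ρ' is achievable by a free probabilistic operation with probability at least min{1, (1−V_F(ρ))/((R^F_F(ρ')−1)V_F(ρ))}. -/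
open scoped ENNReal ComplexOrder
open Matrix

noncomputable section

variable {ι κ : Type*}

/-!
Comparing traces in `λσ - ρ' = cσ'` gives `c = λ - 1`, so `τ := (λ - 1)⁻¹(λσ - ρ')` is a state of
`F'` and `E` is the measure-and-prepare map `X ↦ μ⟨P, X⟩ρ' + ⟨1 - P, X⟩τ`. Its Choi matrix
`μP ⊗ ρ' + (1 - P) ⊗ τ` is positive, and `μ ≤ 1` makes it trace-non-increasing. For `π ∈ F` with
`t = ⟨P, π⟩ ≤ v`, substituting `ρ' = λσ - (λ - 1)τ` gives
`E(π) = μtλ σ + (1 - t - μt(λ - 1)) τ`; the choice of `μ` is exactly what makes the second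
coefficient nonnegative, and convexity of `F'` puts `E(π)` in `cone(F')`.
-/

open scoped MatrixOrder

theorem Matrix.PosSemidef.trace_mul_nonneg {𝕜 : Type*} [RCLike 𝕜] [Fintype ι]
    {A B : Matrix ι ι 𝕜} (hA : A.PosSemidef) (hB : B.PosSemidef) : 0 ≤ (A * B).trace := by
  classical
  obtain ⟨C, rfl⟩ := CStarAlgebra.nonneg_iff_eq_star_mul_self.mp hA.nonneg
  rw [star_eq_conjTranspose, Matrix.mul_assoc, trace_mul_comm]
  exact (hB.mul_mul_conjTranspose_same C).trace_nonneg

theorem Matrix.IsHermitian.posSemidef_one_sub {𝕜 : Type*} [RCLike 𝕜] [Fintype ι] [DecidableEq ι]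
    {P : Matrix ι ι 𝕜} (hP : P.IsHermitian) (hPP : IsIdempotentElem P) : (1 - P).PosSemidef :=
  Matrix.nonneg_iff_posSemidef.mp (IsStarProjection.one_sub_nonneg ⟨hPP, hP⟩)

section coneF

variable [Fintype ι] {F : Set (Matrix ι ι ℂ)} {X Y : Matrix ι ι ℂ}

theorem smul_mem_coneF {a : ℝ} (ha : 0 ≤ a) (hX : X ∈ coneF F) : (a : ℂ) • X ∈ coneF F := by
  obtain ⟨c, hc, σ, hσ, rfl⟩ := hX
  exact ⟨a * c, mul_nonneg ha hc, σ, hσ, by rw [smul_smul, Complex.ofReal_mul]⟩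

theorem add_mem_coneF (hF : Convex ℝ F) (hX : X ∈ coneF F) (hY : Y ∈ coneF F) :
    X + Y ∈ coneF F := by
  obtain ⟨a, ha, σ, hσ, rfl⟩ := hX
  obtain ⟨b, hb, τ, hτ, rfl⟩ := hY
  rcases (add_nonneg ha hb).eq_or_lt with hab | hab
  · obtain ⟨rfl, rfl⟩ : a = 0 ∧ b = 0 := ⟨by linarith, by linarith⟩
    exact ⟨0, le_rfl, σ, hσ, by simp⟩
  · refine ⟨a + b, hab.le, _, convex_iff_div.mp hF hσ hτ ha hb hab, ?_⟩
    simp only [Complex.coe_smul, smul_add, smul_smul, mul_div_cancel₀ _ hab.ne']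

theorem smul_add_smul_mem_coneF (hF : Convex ℝ F) {σ τ : Matrix ι ι ℂ} (hσ : σ ∈ F)
    (hτ : τ ∈ F) {lam s t : ℝ} (hlam : 0 ≤ lam) (hs : 0 ≤ s) (hst : s * (lam - 1) ≤ t) :
    (s : ℂ) • ((lam : ℂ) • σ - ((lam - 1 : ℝ) : ℂ) • τ) + (t : ℂ) • τ ∈ coneF F := by
  have hsplit : (s : ℂ) • ((lam : ℂ) • σ - ((lam - 1 : ℝ) : ℂ) • τ) + (t : ℂ) • τ =
      ((s * lam : ℝ) : ℂ) • σ + ((t - s * (lam - 1) : ℝ) : ℂ) • τ := by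
    push_cast
    module
  rw [hsplit]
  exact add_mem_coneF hF ⟨_, mul_nonneg hs hlam, σ, hσ, rfl⟩ ⟨_, sub_nonneg.mpr hst, τ, hτ, rfl⟩

theorem inv_smul_mem_of_mem_coneF (hF : ∀ σ ∈ F, IsState σ) (hX : X ∈ coneF F) {c : ℝ}
    (hc : c ≠ 0) (hXc : X.trace = c) : (c : ℂ)⁻¹ • X ∈ F := by
  obtain ⟨a, -, σ, hσ, rfl⟩ := hX
  obtain rfl : a = c := by
    simpa [(hF σ hσ).2] using hXc
  rwa [smul_smul, inv_mul_cancel₀ (Complex.ofReal_ne_zero.mpr hc), one_smul]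

end coneF

theorem mul_mul_sub_one_le_one_sub {mu v lam t : ℝ} (hlam : 1 < lam) (ht : 0 ≤ t) (htv : t ≤ v)
    (hmu : mu ≤ (1 - v) / ((lam - 1) * v)) : mu * t * (lam - 1) ≤ 1 - t := by
  rcases ht.eq_or_lt with rfl | ht
  · simp
  have hv : 0 < v := ht.trans_le htv
  have hmu' : mu * ((lam - 1) * v) ≤ 1 - v := (le_div_iff₀ (by positivity)).mp hmu
  have : mu * t * (lam - 1) * v ≤ (1 - t) * v := by nlinarith
  exact le_of_mul_le_mul_right this hv

section MeasurePrepare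

variable [Fintype ι] [DecidableEq ι] {P X : Matrix ι ι ℂ} {A B : Matrix κ κ ℂ}

def measurePrepare (P : Matrix ι ι ℂ) (A B : Matrix κ κ ℂ) (X : Matrix ι ι ℂ) :
    Matrix κ κ ℂ :=
  (P * X).trace • A + ((1 - P) * X).trace • B

theorem measurePrepare_smul (c : ℂ) :
    measurePrepare P A B (c • X) = c • measurePrepare P A B X := by
  simp only [measurePrepare, Matrix.mul_smul, trace_smul, smul_eq_mul, mul_smul, smul_add]

theorem trace_one_sub_mul : ((1 - P) * X).trace = X.trace - (P * X).trace := by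
  rw [Matrix.sub_mul, Matrix.one_mul, trace_sub]

theorem measurePrepare_of_mul_eq (hPX : P * X = X) : measurePrepare P A B X = X.trace • A := by
  simp [measurePrepare, trace_one_sub_mul, hPX]

theorem re_trace_measurePrepare_le [Fintype κ] (hP : P.PosSemidef) (hX : X.PosSemidef) {a : ℝ}
    (ha : a ≤ 1) (hA : A.trace = a) (hB : B.trace = 1) :
    (measurePrepare P A B X).trace.re ≤ X.trace.re := by
  have hPX : 0 ≤ (P * X).trace.re := (Complex.nonneg_iff.mp (hP.trace_mul_nonneg hX)).1
  have htrace :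
      (measurePrepare P A B X).trace = a * (P * X).trace + (X.trace - (P * X).trace) := by
    rw [measurePrepare, trace_add, trace_smul, trace_smul, hA, hB, trace_one_sub_mul,
      smul_eq_mul, smul_eq_mul, mul_one, mul_comm]
  rw [htrace]
  simp only [Complex.add_re, Complex.sub_re, Complex.re_ofReal_mul]
  nlinarith

theorem measurePrepare_mem_coneF [Fintype κ] {F : Set (Matrix ι ι ℂ)} {F' : Set (Matrix κ κ ℂ)}
    (hF' : Convex ℝ F') (hF : ∀ π ∈ F, IsState π) (hP : P.PosSemidef) {v lam mu : ℝ}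
    (hv : ∀ π ∈ F, ((P * π).trace).re ≤ v) (hlam : 1 < lam) (hmu0 : 0 ≤ mu)
    (hmu : mu ≤ (1 - v) / ((lam - 1) * v)) {σ τ : Matrix κ κ ℂ} (hσ : σ ∈ F') (hτ : τ ∈ F') :
    ∀ π ∈ coneF F,
      measurePrepare P ((mu : ℂ) • ((lam : ℂ) • σ - ((lam - 1 : ℝ) : ℂ) • τ)) τ π ∈ coneF F' := by
  rintro _ ⟨a, ha, π, hπ, rfl⟩
  rw [measurePrepare_smul]
  refine smul_mem_coneF ha ?_
  have hPπ : 0 ≤ (P * π).trace := hP.trace_mul_nonneg (hF π hπ).1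
  set t := (P * π).trace.re
  have ht : (P * π).trace = t := Complex.eq_re_of_ofReal_le (by exact_mod_cast hPπ)
  have ht0 : 0 ≤ t := (Complex.nonneg_iff.mp hPπ).1
  have hexpand : measurePrepare P ((mu : ℂ) • ((lam : ℂ) • σ - ((lam - 1 : ℝ) : ℂ) • τ)) τ π =
      ((mu * t : ℝ) : ℂ) • ((lam : ℂ) • σ - ((lam - 1 : ℝ) : ℂ) • τ) + ((1 - t : ℝ) : ℂ) • τ := by
    rw [measurePrepare, trace_one_sub_mul, (hF π hπ).2, ht, smul_smul]
    push_cast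
    ring_nf
  rw [hexpand]
  exact smul_add_smul_mem_coneF hF' hσ hτ (by linarith) (mul_nonneg hmu0 ht0)
    (mul_mul_sub_one_le_one_sub hlam ht0 (hv π hπ) hmu)

end MeasurePrepare

theorem probability_lower_bound_map_general [Fintype ι] [DecidableEq ι] [Fintype κ]
    (F : Set (Matrix ι ι ℂ)) (F' : Set (Matrix κ κ ℂ))
    (hconvF' : Convex ℝ F')
    (hFstates : ∀ π ∈ F, IsState π) (hF'states : ∀ σ ∈ F', IsState σ)
    (ρ : Matrix ι ι ℂ) (ρ' : Matrix κ κ ℂ) (hρ : IsState ρ) (hρ' : IsState ρ')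
    (P : Matrix ι ι ℂ) (hP : P.PosSemidef) (hPP : P * P = P) (hPρ : P * ρ = ρ)
    (v : ℝ) (hv0 : 0 ≤ v) (hv1 : v < 1)
    (hv : ∀ π ∈ F, ((P * π).trace).re ≤ v)
    (lam : ℝ) (hlam : 1 < lam)
    (σ : Matrix κ κ ℂ) (hσ : σ ∈ F') (hcone : ((lam : ℂ) • σ - ρ') ∈ coneF F')
    (mu : ℝ) (hmu : mu = min 1 ((1 - v) / ((lam - 1) * v)))
    (E : Matrix ι ι ℂ → Matrix κ κ ℂ)
    (hEdef : E = fun X => ((mu : ℂ) * (P * X).trace) • ρ' +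
      (((1 - P) * X).trace) • (((lam - 1 : ℝ) : ℂ)⁻¹ • ((lam : ℂ) • σ - ρ'))) :
    (Matrix.kroneckerMap (· * ·) ((mu : ℂ) • P) ρ' +
        Matrix.kroneckerMap (· * ·) (1 - P)
          (((lam - 1 : ℝ) : ℂ)⁻¹ • ((lam : ℂ) • σ - ρ'))).PosSemidef ∧
      (∀ X : Matrix ι ι ℂ, X.PosSemidef → ((E X).trace).re ≤ (X.trace).re) ∧
      (∀ π ∈ coneF F, E π ∈ coneF F') ∧
      E ρ = ((mu : ℝ) : ℂ) • ρ' := by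
  have hlam1 : (lam - 1 : ℝ) ≠ 0 := by linarith
  -- `τ` is a fresh variable, so that rewriting `ρ'` below leaves it alone.
  obtain ⟨τ, hτ⟩ : ∃ τ, ((lam - 1 : ℝ) : ℂ)⁻¹ • ((lam : ℂ) • σ - ρ') = τ := ⟨_, rfl⟩
  have hτF' : τ ∈ F' := hτ ▸ inv_smul_mem_of_mem_coneF hF'states hcone hlam1
    (by simp [trace_sub, (hF'states σ hσ).2, hρ'.2])
  have hρ'τ : ρ' = (lam : ℂ) • σ - ((lam - 1 : ℝ) : ℂ) • τ := by
    rw [← hτ, smul_smul, mul_inv_cancel₀ (Complex.ofReal_ne_zero.mpr hlam1), one_smul,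
      sub_sub_cancel]
  have hmu0 : 0 ≤ mu :=
    hmu ▸ le_min zero_le_one (div_nonneg (by linarith) (mul_nonneg (by linarith) hv0))
  obtain rfl : E = measurePrepare P ((mu : ℂ) • ρ') τ := by
    rw [hEdef, hτ]
    funext X
    rw [measurePrepare, mul_comm, mul_smul]
  refine ⟨?_, fun X hX => re_trace_measurePrepare_le hP hX (hmu ▸ min_le_left _ _) ?_
    (hF'states τ hτF').2, ?_, ?_⟩
  · rw [hτ]
    exact ((hP.smul (by exact_mod_cast hmu0)).kronecker hρ'.1).add
      ((hP.isHermitian.posSemidef_one_sub hPP).kronecker (hF'states τ hτF').1)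
  · rw [trace_smul, hρ'.2, smul_eq_mul, mul_one]
  · rw [hρ'τ]
    exact measurePrepare_mem_coneF hconvF' hFstates hP hv hlam hmu0 (hmu ▸ min_le_right _ _)
      hσ hτF'
  · rw [measurePrepare_of_mul_eq hPρ, hρ.2, one_smul]

/-- Lower bound on exact transformation probability: with `P` the support
projection of `ρ`, `V_F(ρ) ≤ v < 1`, `λ = R^F_F(ρ') > 1` witnessed by `σ ∈ F'` with
`λσ - ρ' ∈ cone(F')`, and `μ = min{1, (1-v)/((λ-1)v)}`, the map
`E(X) = μ⟨P,X⟩ρ' + ⟨I-P,X⟩(λσ-ρ')/(λ-1)` is completely positive (PSD Choi operator),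
trace-non-increasing, maps `cone(F)` into `cone(F')`, and satisfies `E(ρ) = μρ'`;
hence `ρ → ρ'` is achievable by a free probabilistic operation with probability `μ`. -/
theorem probability_lower_bound_map [Fintype ι] [DecidableEq ι] [Fintype κ] [DecidableEq κ]
    (F : Set (Matrix ι ι ℂ)) (F' : Set (Matrix κ κ ℂ))
    (hF : IsClosed F) (hF' : IsClosed F') (hconvF' : Convex ℝ F')
    (hFstates : ∀ π ∈ F, IsState π) (hF'states : ∀ σ ∈ F', IsState σ)
    (ρ : Matrix ι ι ℂ) (ρ' : Matrix κ κ ℂ) (hρ : IsState ρ) (hρ' : IsState ρ')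
    (P : Matrix ι ι ℂ) (hP : P.PosSemidef) (hPP : P * P = P) (hPρ : P * ρ = ρ)
    (v : ℝ) (hv0 : 0 ≤ v) (hv1 : v < 1)
    (hv : ∀ π ∈ F, ((P * π).trace).re ≤ v)
    (lam : ℝ) (hlam : 1 < lam)
    (σ : Matrix κ κ ℂ) (hσ : σ ∈ F') (hcone : ((lam : ℂ) • σ - ρ') ∈ coneF F')
    (mu : ℝ) (hmu : mu = min 1 ((1 - v) / ((lam - 1) * v)))
    (E : Matrix ι ι ℂ → Matrix κ κ ℂ)
    (hEdef : E = fun X => ((mu : ℂ) * (P * X).trace) • ρ' +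
      (((1 - P) * X).trace) • (((lam - 1 : ℝ) : ℂ)⁻¹ • ((lam : ℂ) • σ - ρ'))) :
    (Matrix.kroneckerMap (· * ·) ((mu : ℂ) • P) ρ' +
        Matrix.kroneckerMap (· * ·) (1 - P)
          (((lam - 1 : ℝ) : ℂ)⁻¹ • ((lam : ℂ) • σ - ρ'))).PosSemidef ∧
      (∀ X : Matrix ι ι ℂ, X.PosSemidef → ((E X).trace).re ≤ (X.trace).re) ∧
      (∀ π ∈ coneF F, E π ∈ coneF F') ∧
      E ρ = ((mu : ℝ) : ℂ) • ρ' :=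
  probability_lower_bound_map_general F F' hconvF' hFstates hF'states ρ ρ' hρ hρ' P hP hPP hPρ v hv0
    hv1 hv lam hlam σ hσ hcone mu hmu E hEdef
end
end
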